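/- A λ-term is strongly normalizing for β-reduction if and only if it is typable in the intersection type system D. -/

import Mathlib

/-- Untyped λ-terms in de Bruijn representation. -/
inductive Term : Type
  | var : ℕ → Term
  | lam : Term → Term
  | app : Term → Term → Term
  deriving DecidableEq

namespace Term

/-- Shift (lift) all de Bruijn indices ≥ d by one. -/
def lift (d : ℕ) : Term → Term
  | var n => var (if n < d then n else n + 1)
  | lam t => lam (lift (d + 1) t)
  | app t u => app (lift d t) (lift d u)

/-- Capture-avoiding substitution `t[k := u]` (de Bruijn style). -/
def subst : Term → ℕ → Term → Term
  | var n, k, u => if n = k then u else var (if n < k then n else n - 1)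
  | lam t, k, u => lam (subst t (k + 1) (lift 0 u))
  | app t v, k, u => app (subst t k u) (subst v k u)

/-- Swap the de Bruijn indices d and d+1 (exchange of two adjacent binders). -/
def swap (d : ℕ) : Term → Term
  | var n => var (if n = d then d + 1 else if n = d + 1 then d else n)
  | lam t => lam (swap (d + 1) t)
  | app t u => app (swap d t) (swap d u)

end Term

/-- The four reduction rules. -/
inductive Rule | beta | delta | gamma | assoc

/-- One-step reduction by a given rule (closed under congruence).
β: (λx.M N) ▷ M[x:=N];
δ: (λy.λx.M N) ▷ λx.(λy.M N), x ∉ FV(N);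
γ: (λx.M N P) ▷ (λx.(M P) N), x ∉ FV(P);
assoc: (M (λx.N P)) ▷ (λx.(M N) P), x ∉ FV(M).
Freshness conditions are realized by lifting. -/
inductive Step : Rule → Term → Term → Prop
  | beta (M N) : Step .beta (.app (.lam M) N) (Term.subst M 0 N)
  | delta (M N) : Step .delta (.app (.lam (.lam M)) N)
      (.lam (.app (.lam (Term.swap 0 M)) (Term.lift 0 N)))
  | gamma (M N P) : Step .gamma (.app (.app (.lam M) N) P)
      (.app (.lam (.app M (Term.lift 0 P))) N)
  | assoc (M N P) : Step .assoc (.app M (.app (.lam N) P))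
      (.app (.lam (.app (Term.lift 0 M) N)) P)
  | appCongL {r t t'} (u) : Step r t t' → Step r (.app t u) (.app t' u)
  | appCongR {r u u'} (t) : Step r u u' → Step r (.app t u) (.app t u')
  | lamCong {r t t'} : Step r t t' → Step r (.lam t) (.lam t')

/-- One-step reduction by the union of the four rules. -/
def StepAll (t t' : Term) : Prop := ∃ r, Step r t t'

/-- Strong normalization for the union of β, δ, γ, assoc. -/
def SN (t : Term) : Prop := Acc (fun a b => StepAll b a) t

/-- Strong normalization for β alone. -/
def SNbeta (t : Term) : Prop := Acc (fun a b => Step .beta b a) t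

mutual
/-- Simple types: atoms and arrows with simple codomain. -/
inductive STy : Type
  | atom : ℕ → STy
  | arrow : Ty → STy → STy
/-- Types of system D: intersections of simple types. -/
inductive Ty : Type
  | simple : STy → Ty
  | inter : STy → Ty → Ty
end

/-- Typing judgment of system D (contexts are lists of types, de Bruijn). -/
inductive Typing : List Ty → Term → Ty → Prop
  | var {Γ n A} : Γ[n]? = some A → Typing Γ (.var n) A
  | app {Γ M N A B} : Typing Γ M (.simple (.arrow A B)) → Typing Γ N A →
      Typing Γ (.app M N) (.simple B)
  | lam {Γ M A B} : Typing (A :: Γ) M (.simple B) →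
      Typing Γ (.lam M) (.simple (.arrow A B))
  | interI {Γ M A B} : Typing Γ M (.simple A) → Typing Γ M B →
      Typing Γ M (.inter A B)
  | interE1 {Γ M A B} : Typing Γ M (.inter A B) → Typing Γ M (.simple A)
  | interE2 {Γ M A B} : Typing Γ M (.inter A B) → Typing Γ M B

/-- A term is typable in system D. -/
def Typable (t : Term) : Prop := ∃ Γ A, Typing Γ t A

/-- (H M₁ ... Mₙ). -/
def appList (H : Term) (Ms : List Term) : Term := Ms.foldl .app H

/-!
Typability implies strong normalization by Tait's reducibility method: an atom is interpreted by
the strongly normalizing terms, `A → S` by the terms sending reducible terms of `A` to reducible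
terms of `S`, and an intersection by the intersection of its components. Reducible terms are
strongly normalizing, variables are reducible, and a typed term is reducible under every reducible
substitution.

Conversely, a strongly normalizing term is typable by induction along β-reduction together with
the subterm relation, which is well founded on such terms. The term is `x M₁ … Mₙ`, `λx.P` or
`(λx.P) N M₁ … Mₙ`. The first two are typed from their subterms; in the third, a typing of the
reduct `P[x:=N] M₁ … Mₙ` is pulled back to the redex (subject expansion) by giving `x` the
intersection of the types of the occurrences of `N`. Typings in different contexts are combined by
intersecting the contexts componentwise.
-/

open Relation

namespace Term

def upRen (ρ : ℕ → ℕ) : ℕ → ℕ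
  | 0 => 0
  | n + 1 => ρ n + 1

def rename (ρ : ℕ → ℕ) : Term → Term
  | var n => var (ρ n)
  | lam t => lam (rename (upRen ρ) t)
  | app t u => app (rename ρ t) (rename ρ u)

def up (σ : ℕ → Term) : ℕ → Term
  | 0 => var 0
  | n + 1 => rename Nat.succ (σ n)

def psubst (σ : ℕ → Term) : Term → Term
  | var n => σ n
  | lam t => lam (psubst (up σ) t)
  | app t u => app (psubst σ t) (psubst σ u)

def scons (N : Term) (σ : ℕ → Term) : ℕ → Term
  | 0 => N
  | n + 1 => σ n

theorem rename_rename (ρ ρ' : ℕ → ℕ) (t : Term) :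
    rename ρ (rename ρ' t) = rename (ρ ∘ ρ') t := by
  induction t generalizing ρ ρ' with
  | var n => rfl
  | lam t ih =>
    rw [rename, rename, rename, ih]
    congr 2; funext n; cases n <;> rfl
  | app t u iht ihu => simp only [rename, iht, ihu]

theorem psubst_rename (σ : ℕ → Term) (ρ : ℕ → ℕ) (t : Term) :
    psubst σ (rename ρ t) = psubst (σ ∘ ρ) t := by
  induction t generalizing σ ρ with
  | var n => rfl
  | lam t ih =>
    rw [rename, psubst, psubst, ih]
    congr 2; funext n; cases n <;> rfl
  | app t u iht ihu => simp only [rename, psubst, iht, ihu]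

theorem rename_psubst (ρ : ℕ → ℕ) (σ : ℕ → Term) (t : Term) :
    rename ρ (psubst σ t) = psubst (rename ρ ∘ σ) t := by
  induction t generalizing ρ σ with
  | var n => rfl
  | lam t ih =>
    rw [psubst, rename, psubst, ih]
    congr 2; funext n
    cases n with
    | zero => rfl
    | succ n => simp only [Function.comp, up, rename_rename]; rfl
  | app t u iht ihu => simp only [rename, psubst, iht, ihu]

theorem psubst_psubst (σ τ : ℕ → Term) (t : Term) :
    psubst σ (psubst τ t) = psubst (psubst σ ∘ τ) t := by
  induction t generalizing σ τ with
  | var n => rfl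
  | lam t ih =>
    rw [psubst, psubst, psubst, ih]
    congr 2; funext n
    cases n with
    | zero => rfl
    | succ n => simp only [Function.comp, up, psubst_rename, rename_psubst]; rfl
  | app t u iht ihu => simp only [psubst, iht, ihu]

theorem psubst_var (t : Term) : psubst var t = t := by
  induction t with
  | var n => rfl
  | lam t ih =>
    have : up var = var := by funext n; cases n <;> rfl
    rw [psubst, this, ih]
  | app t u iht ihu => rw [psubst, iht, ihu]

theorem lift_eq_rename (d : ℕ) (t : Term) :
    lift d t = rename (fun n => if n < d then n else n + 1) t := by
  induction t generalizing d with
  | var n => rfl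
  | lam t ih =>
    rw [lift, rename, ih]
    congr 2; funext n
    cases n with
    | zero => rfl
    | succ n => simp only [upRen]; split_ifs <;> omega
  | app t u iht ihu => rw [lift, rename, iht, ihu]

theorem subst_eq_psubst (t : Term) (k : ℕ) (u : Term) :
    subst t k u = psubst (fun n => if n = k then u else var (if n < k then n else n - 1)) t := by
  induction t generalizing k u with
  | var n => rfl
  | lam t ih =>
    rw [subst, psubst, ih]
    congr 2; funext n
    cases n with
    | zero => rfl
    | succ n =>
      simp only [up, lift_eq_rename, Nat.not_lt_zero, if_false]
      by_cases h : n = k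
      · simp [h]
      · simp only [h, add_left_inj, if_false, rename]
        congr 1; split_ifs <;> omega
  | app t v iht ihv => rw [subst, psubst, iht, ihv]

theorem subst_psubst_up (σ : ℕ → Term) (M N : Term) :
    subst (psubst (up σ) M) 0 N = psubst (scons N σ) M := by
  rw [subst_eq_psubst, psubst_psubst]
  congr 1; funext n
  cases n with
  | zero => rfl
  | succ n =>
    show psubst _ (rename Nat.succ (σ n)) = σ n
    rw [psubst_rename]
    convert psubst_var (σ n) using 2
    funext m; simp

theorem psubst_subst (σ : ℕ → Term) (M N : Term) :
    psubst σ (subst M 0 N) = subst (psubst (up σ) M) 0 (psubst σ N) := by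
  rw [subst_psubst_up, subst_eq_psubst, psubst_psubst]
  congr 1; funext n
  cases n <;> simp [psubst] <;> rfl

end Term

theorem Step.psubst {t t' : Term} (h : Step .beta t t') (σ : ℕ → Term) :
    Step .beta (t.psubst σ) (t'.psubst σ) := by
  generalize hr : Rule.beta = r at h
  induction h generalizing σ with
  | beta M N => rw [Term.psubst_subst]; exact Step.beta _ _
  | delta | gamma | assoc => cases hr
  | appCongL u _ ih => exact Step.appCongL _ (ih σ hr)
  | appCongR t _ ih => exact Step.appCongR _ (ih σ hr)
  | lamCong _ ih => exact Step.lamCong (ih _ hr)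

theorem Step.subst {t t' : Term} (h : Step .beta t t') (k : ℕ) (u : Term) :
    Step .beta (t.subst k u) (t'.subst k u) := by
  simp only [Term.subst_eq_psubst]
  exact h.psubst _

theorem SNbeta.of_map {f : Term → Term} (hf : ∀ a b, Step .beta a b → Step .beta (f a) (f b))
    {t : Term} (h : SNbeta (f t)) : SNbeta t := by
  generalize hx : f t = x at h
  induction h generalizing t with
  | intro x _ ih =>
    subst hx
    exact Acc.intro _ fun u hu => ih _ (hf _ _ hu) rfl

theorem SNbeta.of_app_left {M N : Term} (h : SNbeta (.app M N)) : SNbeta M :=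
  h.of_map fun _ _ hs => Step.appCongL N hs

theorem SNbeta.of_subst {P N : Term} (h : SNbeta (P.subst 0 N)) : SNbeta P :=
  h.of_map fun _ _ hs => hs.subst 0 N

mutual
def Red : STy → Term → Prop
  | .atom _, M => SNbeta M
  | .arrow A S, M => ∀ N, RedT A N → Red S (.app M N)
def RedT : Ty → Term → Prop
  | .simple S, M => Red S M
  | .inter S T, M => Red S M ∧ RedT T M
end

def Neutral : Term → Prop
  | .lam _ => False
  | _ => True

mutual
theorem Red.step : ∀ {S : STy} {M M' : Term}, Red S M → Step .beta M M' → Red S M'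
  | .atom _, _, _, h, hs => Acc.inv h hs
  | .arrow _ _, _, _, h, hs => fun N hN => Red.step (h N hN) (Step.appCongL N hs)
theorem RedT.step : ∀ {A : Ty} {M M' : Term}, RedT A M → Step .beta M M' → RedT A M'
  | .simple _, _, _, h, hs => Red.step h hs
  | .inter _ _, _, _, h, hs => ⟨Red.step h.1 hs, RedT.step h.2 hs⟩
end

mutual
theorem Red.snbeta : ∀ {S : STy} {M : Term}, Red S M → SNbeta M
  | .atom _, _, h => h
  | .arrow _ _, _, h => (Red.snbeta (h _ (RedT.of_neutral (M := .var 0) trivial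
      fun _ hs => by cases hs))).of_app_left
theorem RedT.snbeta : ∀ {A : Ty} {M : Term}, RedT A M → SNbeta M
  | .simple _, _, h => Red.snbeta h
  | .inter _ _, _, h => Red.snbeta h.1
theorem Red.of_neutral : ∀ {S : STy} {M : Term}, Neutral M →
    (∀ M', Step .beta M M' → Red S M') → Red S M
  | .atom _, _, _, h => Acc.intro _ h
  | .arrow A S, M, hM, h => by
    intro N hN
    induction RedT.snbeta hN with
    | intro N _ ih =>
      refine Red.of_neutral trivial fun M' hs => ?_
      cases hs with
      | beta => exact absurd hM id
      | appCongL _ hs => exact h _ hs N hN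
      | appCongR _ hs => exact ih _ hs (hN.step hs)
theorem RedT.of_neutral : ∀ {A : Ty} {M : Term}, Neutral M →
    (∀ M', Step .beta M M' → RedT A M') → RedT A M
  | .simple _, _, hM, h => Red.of_neutral hM h
  | .inter _ _, _, hM, h =>
    ⟨Red.of_neutral hM fun M' hs => (h M' hs).1, RedT.of_neutral hM fun M' hs => (h M' hs).2⟩
end

theorem redT_var (A : Ty) (n : ℕ) : RedT A (.var n) :=
  RedT.of_neutral trivial fun _ hs => by cases hs

theorem Red.lam {A : Ty} {S : STy} {P : Term} (h : ∀ N, RedT A N → Red S (P.subst 0 N)) :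
    Red (.arrow A S) (.lam P) := by
  induction (h _ (redT_var A 0)).snbeta.of_subst with
  | intro P _ ihP =>
    intro N hN
    induction RedT.snbeta hN with
    | intro N _ ihN =>
      refine Red.of_neutral trivial fun M' hs => ?_
      cases hs with
      | beta => exact h N hN
      | appCongL _ hs =>
        cases hs with
        | lamCong hs => exact ihP _ hs (fun N hN => (h N hN).step (hs.subst 0 N)) N hN
      | appCongR _ hs => exact ihN _ hs (hN.step hs)

theorem Typing.redT_psubst {Γ : List Ty} {M : Term} {A : Ty} (h : Typing Γ M A)
    {σ : ℕ → Term} (hσ : ∀ n B, Γ[n]? = some B → RedT B (σ n)) : RedT A (M.psubst σ) := by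
  induction h generalizing σ with
  | var hn => exact hσ _ _ hn
  | app _ _ ihM ihN => exact ihM hσ _ (ihN hσ)
  | lam _ ih =>
    refine Red.lam fun N hN => ?_
    rw [Term.subst_psubst_up]
    refine ih fun n C hn => ?_
    cases n with
    | zero => cases hn; exact hN
    | succ n => exact hσ n C hn
  | interI _ _ ih1 ih2 => exact ⟨ih1 hσ, ih2 hσ⟩
  | interE1 _ ih => exact (ih hσ).1
  | interE2 _ ih => exact (ih hσ).2

theorem Typable.snbeta {t : Term} (h : Typable t) : SNbeta t := by
  obtain ⟨Γ, A, h⟩ := h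
  simpa only [Term.psubst_var] using (h.redT_psubst fun n B _ => redT_var B n).snbeta

namespace Ty

def comps : Ty → List STy
  | simple S => [S]
  | inter S T => S :: comps T

def meet : Ty → Ty → Ty
  | simple S, B => inter S B
  | inter S T, B => inter S (meet T B)

@[simp]
theorem comps_meet : ∀ A B : Ty, (A.meet B).comps = A.comps ++ B.comps
  | simple _, _ => rfl
  | inter _ T, B => by simp [meet, comps, comps_meet T B]

end Ty

theorem typing_iff_forall_comps {Γ : List Ty} {M : Term} :
    ∀ {A : Ty}, Typing Γ M A ↔ ∀ S ∈ A.comps, Typing Γ M (.simple S)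
  | .simple S => by simp [Ty.comps]
  | .inter S T => by
    simp only [Ty.comps, List.forall_mem_cons, ← typing_iff_forall_comps]
    exact ⟨fun h => ⟨h.interE1, h.interE2⟩, fun h => h.1.interI h.2⟩

theorem Typing.of_comps_subset {Γ : List Ty} {M : Term} {A B : Ty} (h : Typing Γ M B)
    (hAB : A.comps ⊆ B.comps) : Typing Γ M A :=
  typing_iff_forall_comps.2 fun S hS => typing_iff_forall_comps.1 h S (hAB hS)

theorem Typing.meet {Γ : List Ty} {M : Term} {A B : Ty} (hA : Typing Γ M A) (hB : Typing Γ M B) :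
    Typing Γ M (A.meet B) := by
  rw [typing_iff_forall_comps] at *
  simpa [or_imp, forall_and] using ⟨hA, hB⟩

theorem Typing.exists_simple {Γ : List Ty} {M : Term} {A : Ty} (h : Typing Γ M A) :
    ∃ S, Typing Γ M (.simple S) := by
  cases A with
  | simple S => exact ⟨S, h⟩
  | inter S _ => exact ⟨S, h.interE1⟩

/-- The premises of the syntax-directed rule that concludes `Γ ⊢ M : S`. -/
def SyntaxDirected (Γ : List Ty) : Term → STy → Prop
  | .var n, S => ∃ B, Γ[n]? = some B ∧ S ∈ B.comps
  | .app M N, S => ∃ A, Typing Γ M (.simple (.arrow A S)) ∧ Typing Γ N A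
  | .lam M, .arrow A S => Typing (A :: Γ) M (.simple S)
  | .lam _, .atom _ => False

theorem Typing.syntaxDirected {Γ : List Ty} {M : Term} {A : Ty} (h : Typing Γ M A) :
    ∀ S ∈ A.comps, SyntaxDirected Γ M S := by
  induction h with
  | var hn => exact fun S hS => ⟨_, hn, hS⟩
  | app hM hN => simpa [Ty.comps, SyntaxDirected] using ⟨_, hM, hN⟩
  | lam h => simpa [Ty.comps, SyntaxDirected] using h
  | interI _ _ ih1 ih2 => simpa [Ty.comps] using ⟨ih1 _ (by simp [Ty.comps]), ih2⟩
  | interE1 _ ih => simpa [Ty.comps] using ih _ (by simp [Ty.comps])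
  | interE2 _ ih => exact fun S hS => ih S (List.mem_cons_of_mem _ hS)

theorem typing_iff_syntaxDirected {Γ : List Ty} {M : Term} {A : Ty} :
    Typing Γ M A ↔ ∀ S ∈ A.comps, SyntaxDirected Γ M S := by
  refine ⟨Typing.syntaxDirected, fun h => typing_iff_forall_comps.2 fun S hS => ?_⟩
  match M, S, h S hS with
  | .var _, _, ⟨_, hn, hS⟩ => exact (Typing.var hn).of_comps_subset (by simpa [Ty.comps])
  | .app _ _, _, ⟨_, hM, hN⟩ => exact hM.app hN
  | .lam _, .arrow _ _, hM => exact hM.lam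

def CtxLE (Γ Δ : List Ty) : Prop :=
  ∀ (n : ℕ) (A : Ty), Γ[n]? = some A → ∃ B, Δ[n]? = some B ∧ A.comps ⊆ B.comps

theorem CtxLE.refl (Γ : List Ty) : CtxLE Γ Γ :=
  fun _ A hA => ⟨A, hA, List.Subset.refl _⟩

theorem CtxLE.nil (Δ : List Ty) : CtxLE [] Δ :=
  fun _ _ h => by simp at h

theorem CtxLE.cons {Γ Δ : List Ty} {A B : Ty} (hAB : A.comps ⊆ B.comps) (h : CtxLE Γ Δ) :
    CtxLE (A :: Γ) (B :: Δ)
  | 0, _, hC => by cases hC; exact ⟨B, rfl, hAB⟩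
  | n + 1, _, hC => h n _ hC

theorem CtxLE.append_cons (Γ₁ Γ₂ : List Ty) {A B : Ty} (hAB : A.comps ⊆ B.comps) :
    CtxLE (Γ₁ ++ A :: Γ₂) (Γ₁ ++ B :: Γ₂) := by
  induction Γ₁ with
  | nil => exact (CtxLE.refl Γ₂).cons hAB
  | cons C Γ₁ ih => exact ih.cons (List.Subset.refl _)

theorem Typing.mono {Γ Δ : List Ty} {M : Term} {A : Ty} (h : Typing Γ M A) (hΓΔ : CtxLE Γ Δ) :
    Typing Δ M A := by
  induction h generalizing Δ with
  | var hn =>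
    obtain ⟨B, hB, hAB⟩ := hΓΔ _ _ hn
    exact (Typing.var hB).of_comps_subset hAB
  | app _ _ ihM ihN => exact (ihM hΓΔ).app (ihN hΓΔ)
  | lam _ ih => exact (ih (hΓΔ.cons (List.Subset.refl _))).lam
  | interI _ _ ih1 ih2 => exact (ih1 hΓΔ).interI (ih2 hΓΔ)
  | interE1 _ ih => exact (ih hΓΔ).interE1
  | interE2 _ ih => exact (ih hΓΔ).interE2

def mergeCtx : List Ty → List Ty → List Ty
  | [], Δ => Δ
  | Γ, [] => Γ
  | A :: Γ, B :: Δ => A.meet B :: mergeCtx Γ Δ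

theorem ctxLE_mergeCtx_left : ∀ Γ Δ : List Ty, CtxLE Γ (mergeCtx Γ Δ)
  | [], Δ => CtxLE.nil Δ
  | _ :: _, [] => CtxLE.refl _
  | _ :: Γ, _ :: Δ => (ctxLE_mergeCtx_left Γ Δ).cons (by simp)

theorem ctxLE_mergeCtx_right : ∀ Γ Δ : List Ty, CtxLE Δ (mergeCtx Γ Δ)
  | [], Δ => CtxLE.refl Δ
  | _ :: _, [] => CtxLE.nil _
  | _ :: Γ, _ :: Δ => (ctxLE_mergeCtx_right Γ Δ).cons (by simp)

theorem Typing.exists_common_ctx {Γ₁ Γ₂ : List Ty} {M N : Term} {A B : Ty}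
    (hM : Typing Γ₁ M A) (hN : Typing Γ₂ N B) : ∃ Δ, Typing Δ M A ∧ Typing Δ N B :=
  ⟨mergeCtx Γ₁ Γ₂, hM.mono (ctxLE_mergeCtx_left _ _), hN.mono (ctxLE_mergeCtx_right _ _)⟩

theorem typing_var_congr {Γ Δ : List Ty} {m n : ℕ} {A : Ty} (h : Γ[m]? = Δ[n]?) :
    Typing Γ (.var m) A ↔ Typing Δ (.var n) A := by
  simp only [typing_iff_syntaxDirected, SyntaxDirected, h]

theorem getElem?_append_cons_lift_index (Γ₁ Γ₂ : List Ty) (X : Ty) (n : ℕ) :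
    (Γ₁ ++ X :: Γ₂)[if n < Γ₁.length then n else n + 1]? = (Γ₁ ++ Γ₂)[n]? := by
  split_ifs with hn
  · simp [List.getElem?_append_left hn]
  · rw [List.getElem?_append_right (by omega), List.getElem?_append_right (by omega),
      show n + 1 - Γ₁.length = n - Γ₁.length + 1 by omega]
    rfl

theorem getElem?_append_subst_index (Γ₁ Γ₂ : List Ty) (X : Ty) {n : ℕ} (hn : n ≠ Γ₁.length) :
    (Γ₁ ++ Γ₂)[if n < Γ₁.length then n else n - 1]? = (Γ₁ ++ X :: Γ₂)[n]? := by
  obtain hlt | hgt := Nat.lt_or_gt_of_ne hn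
  · simp [hlt, List.getElem?_append_left hlt]
  · rw [if_neg (by omega), ← getElem?_append_cons_lift_index Γ₁ Γ₂ X, if_neg (by omega),
      Nat.sub_add_cancel (by omega)]

theorem typing_lift_iff {Γ₂ : List Ty} {X : Ty} (M : Term) :
    ∀ {Γ₁ : List Ty} {A : Ty},
      Typing (Γ₁ ++ X :: Γ₂) (M.lift Γ₁.length) A ↔ Typing (Γ₁ ++ Γ₂) M A := by
  induction M with
  | var n => exact typing_var_congr (getElem?_append_cons_lift_index _ _ _ n)
  | lam P ih =>
    intro Γ₁ A
    rw [typing_iff_syntaxDirected, typing_iff_syntaxDirected, Term.lift]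
    refine forall₂_congr fun S _ => ?_
    cases S with
    | atom => rfl
    | arrow B S => exact ih (Γ₁ := B :: Γ₁)
  | app P Q ihP ihQ =>
    intro Γ₁ A
    rw [typing_iff_syntaxDirected, typing_iff_syntaxDirected, Term.lift]
    simp only [SyntaxDirected, ihP, ihQ]

theorem exists_hole_typing_of_forall_comps {Γ₁ Γ₂ : List Ty} {P u : Term} :
    ∀ {A : Ty}, (∀ S ∈ A.comps,
      ∃ C, Typing (Γ₁ ++ C :: Γ₂) P (.simple S) ∧ Typing (Γ₁ ++ Γ₂) u C) →
    ∃ C, Typing (Γ₁ ++ C :: Γ₂) P A ∧ Typing (Γ₁ ++ Γ₂) u C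
  | .simple S, h => h S (by simp [Ty.comps])
  | .inter S T, h => by
    obtain ⟨C₁, hP₁, hu₁⟩ := h S (by simp [Ty.comps])
    obtain ⟨C₂, hP₂, hu₂⟩ :=
      exists_hole_typing_of_forall_comps fun S' hS' => h S' (List.mem_cons_of_mem _ hS')
    exact ⟨C₁.meet C₂, (hP₁.mono (.append_cons _ _ (by simp))).interI
      (hP₂.mono (.append_cons _ _ (by simp))), hu₁.meet hu₂⟩

/-- The type of the hole is the intersection of the types of the occurrences of `u`, or `B`
when there are none. -/
theorem Typing.exists_hole_of_subst {Γ₂ : List Ty} (P : Term) :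
    ∀ {Γ₁ : List Ty} {u : Term} {A B : Ty}, Typing (Γ₁ ++ Γ₂) (P.subst Γ₁.length u) A →
      Typing (Γ₁ ++ Γ₂) u B → ∃ C, Typing (Γ₁ ++ C :: Γ₂) P A ∧ Typing (Γ₁ ++ Γ₂) u C := by
  induction P with
  | var n =>
    intro Γ₁ u A B hA hu
    by_cases hn : n = Γ₁.length
    · subst hn
      rw [Term.subst, if_pos rfl] at hA
      exact ⟨A, Typing.var (by simp), hA⟩
    · rw [Term.subst, if_neg hn] at hA
      exact ⟨B, (typing_var_congr (getElem?_append_subst_index Γ₁ Γ₂ B hn)).1 hA, hu⟩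
  | lam P ih =>
    intro Γ₁ u A B hA hu
    rw [Term.subst] at hA
    refine exists_hole_typing_of_forall_comps fun S hS => ?_
    cases S with
    | atom => exact (hA.syntaxDirected _ hS).elim
    | arrow D E =>
      obtain ⟨C, hP, hu⟩ := ih (Γ₁ := D :: Γ₁) (hA.syntaxDirected _ hS)
        ((typing_lift_iff u (Γ₁ := [])).2 hu)
      exact ⟨C, hP.lam, (typing_lift_iff u (Γ₁ := [])).1 hu⟩
  | app P Q ihP ihQ =>
    intro Γ₁ u A B hA hu
    refine exists_hole_typing_of_forall_comps fun S hS => ?_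
    obtain ⟨D, hP, hQ⟩ := hA.syntaxDirected S hS
    obtain ⟨C₁, hP, hu₁⟩ := ihP hP hu
    obtain ⟨C₂, hQ, hu₂⟩ := ihQ hQ hu
    exact ⟨C₁.meet C₂, (hP.mono (.append_cons _ _ (by simp))).app
      (hQ.mono (.append_cons _ _ (by simp))), hu₁.meet hu₂⟩

theorem Typing.app_lam_of_subst {Γ : List Ty} {P N : Term} {A B : Ty}
    (h : Typing Γ (P.subst 0 N) A) (hN : Typing Γ N B) : Typing Γ (.app (.lam P) N) A := by
  obtain ⟨C, hP, hN⟩ := Typing.exists_hole_of_subst P (Γ₁ := []) h hN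
  exact typing_iff_forall_comps.2 fun S hS => (typing_iff_forall_comps.1 hP S hS).lam.app hN

namespace Term

inductive ImmSubterm : Term → Term → Prop
  | lam (t : Term) : ImmSubterm t (.lam t)
  | appL (t u : Term) : ImmSubterm t (.app t u)
  | appR (t u : Term) : ImmSubterm u (.app t u)

theorem wellFounded_immSubterm : WellFounded ImmSubterm := by
  refine ⟨fun t => ?_⟩
  induction t with
  | var n => exact Acc.intro _ fun _ h => by cases h
  | lam t ih => exact Acc.intro _ fun _ h => by cases h; exact ih
  | app t u iht ihu => exact Acc.intro _ fun _ h => by cases h <;> assumption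

theorem ImmSubterm.exists_step {s t s' : Term} (h : ImmSubterm s t) (hs : Step .beta s s') :
    ∃ t', Step .beta t t' ∧ ImmSubterm s' t' := by
  cases h with
  | lam => exact ⟨_, hs.lamCong, .lam _⟩
  | appL _ u => exact ⟨_, hs.appCongL u, .appL _ _⟩
  | appR t _ => exact ⟨_, hs.appCongR t, .appR _ _⟩

theorem exists_step_of_reflTransGen_immSubterm {s t s' : Term}
    (h : ReflTransGen ImmSubterm s t) (hs : Step .beta s s') :
    ∃ t', Step .beta t t' ∧ ReflTransGen ImmSubterm s' t' := by
  induction h with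
  | refl => exact ⟨s', hs, .refl⟩
  | tail _ hbc ih =>
    obtain ⟨b', hb, hsb⟩ := ih
    obtain ⟨c', hc, hbc'⟩ := hbc.exists_step hb
    exact ⟨c', hc, hsb.tail hbc'⟩

theorem appList_append_singleton (H : Term) (Ms : List Term) (M : Term) :
    appList H (Ms ++ [M]) = .app (appList H Ms) M := by
  simp [appList]

theorem eq_appList_var_or_eq_appList_lam (t : Term) :
    (∃ n Ms, t = appList (.var n) Ms) ∨ ∃ P Ms, t = appList (.lam P) Ms := by
  induction t with
  | var n => exact .inl ⟨n, [], rfl⟩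
  | lam P _ => exact .inr ⟨P, [], rfl⟩
  | app f a ih _ =>
    rcases ih with ⟨n, Ms, rfl⟩ | ⟨P, Ms, rfl⟩
    · exact .inl ⟨n, Ms ++ [a], (appList_append_singleton _ _ _).symm⟩
    · exact .inr ⟨P, Ms ++ [a], (appList_append_singleton _ _ _).symm⟩

theorem reflTransGen_immSubterm_appList (H : Term) (Ms : List Term) :
    ReflTransGen ImmSubterm H (appList H Ms) := by
  induction Ms generalizing H with
  | nil => exact .refl
  | cons M Ms ih => exact .head (.appL H M) (ih _)

theorem transGen_immSubterm_appList_of_mem {H M : Term} {Ms : List Term} (hM : M ∈ Ms) :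
    TransGen ImmSubterm M (appList H Ms) := by
  induction Ms generalizing H with
  | nil => cases hM
  | cons N Ms ih =>
    rcases List.mem_cons.1 hM with rfl | hM
    · exact .head' (.appR H M) (reflTransGen_immSubterm_appList _ Ms)
    · exact ih hM

end Term

theorem Step.appList {r : Rule} {H H' : Term} (h : Step r H H') (Ms : List Term) :
    Step r (appList H Ms) (appList H' Ms) := by
  induction Ms generalizing H H' with
  | nil => exact h
  | cons M Ms ih => exact ih (h.appCongL M)

def ReductOrImmSubterm (a b : Term) : Prop := Step .beta b a ∨ Term.ImmSubterm a b

theorem SNbeta.acc_reductOrImmSubterm {t : Term} (h : SNbeta t) : Acc ReductOrImmSubterm t := by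
  suffices ∀ s, ReflTransGen Term.ImmSubterm s t → Acc ReductOrImmSubterm s from
    this t .refl
  induction h with
  | intro t _ ih =>
    intro s hs
    induction s using Term.wellFounded_immSubterm.induction with
    | _ s ihs =>
      refine Acc.intro _ fun a ha => ?_
      rcases ha with hred | hsub
      · obtain ⟨t', ht', ha⟩ := Term.exists_step_of_reflTransGen_immSubterm hs hred
        exact ih t' ht' a ha
      · exact ihs a hsub (.head hsub hs)

theorem exists_typing_var (n : ℕ) (S : STy) : ∃ Γ, Typing Γ (.var n) (.simple S) :=
  ⟨List.replicate n (.simple S) ++ [.simple S], .var (by simp)⟩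

theorem Typable.lam {P : Term} (h : Typable P) : Typable (.lam P) := by
  obtain ⟨Γ, A, hA⟩ := h
  obtain ⟨S, hS⟩ := hA.exists_simple
  cases Γ with
  | nil => exact ⟨[], _, (hS.mono (CtxLE.nil [.simple S])).lam⟩
  | cons B Γ => exact ⟨Γ, _, hS.lam⟩

theorem exists_typing_appList {H : Term} (hH : ∀ S, ∃ Γ, Typing Γ H (.simple S)) {Ms : List Term}
    (hMs : ∀ M ∈ Ms, Typable M) (S : STy) : ∃ Γ, Typing Γ (appList H Ms) (.simple S) := by
  induction Ms generalizing H with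
  | nil => exact hH S
  | cons M Ms ih =>
    refine ih (fun S => ?_) fun N hN => hMs N (List.mem_cons_of_mem _ hN)
    obtain ⟨Γ₁, A, hM⟩ := hMs M List.mem_cons_self
    obtain ⟨Γ₂, hH⟩ := hH (.arrow A S)
    obtain ⟨Δ, hH, hM⟩ := hH.exists_common_ctx hM
    exact ⟨Δ, hH.app hM⟩

theorem Typing.appList_of_head {Γ : List Ty} {H H' : Term}
    (hH : ∀ A, Typing Γ H A → Typing Γ H' A) (Ms : List Term) {A : Ty}
    (h : Typing Γ (appList H Ms) A) : Typing Γ (appList H' Ms) A := by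
  induction Ms generalizing H H' with
  | nil => exact hH A h
  | cons M Ms ih =>
    refine ih (fun B hB => ?_) h
    rw [typing_iff_syntaxDirected] at hB ⊢
    exact fun S hS => let ⟨C, hHC, hM⟩ := hB S hS; ⟨C, hH _ hHC, hM⟩

theorem SNbeta.typable {t : Term} (h : SNbeta t) : Typable t := by
  have hacc := h.acc_reductOrImmSubterm.transGen
  clear h
  induction hacc with
  | intro t _ ih =>
    have typable_of_sub : ∀ {M}, TransGen Term.ImmSubterm M t → Typable M :=
      fun hM => ih _ (TransGen.mono (fun _ _ => Or.inr) _ _ hM)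
    rcases t.eq_appList_var_or_eq_appList_lam with ⟨n, Ms, rfl⟩ | ⟨P, _ | ⟨N, Ms⟩, rfl⟩
    · obtain ⟨Γ, h⟩ := exists_typing_appList (exists_typing_var n)
        (fun M hM => typable_of_sub (Term.transGen_immSubterm_appList_of_mem hM)) (.atom 0)
      exact ⟨Γ, _, h⟩
    · exact (typable_of_sub (.single (.lam P))).lam
    · obtain ⟨Γ₁, A, hred⟩ := ih _ (.single (.inl ((Step.beta P N).appList Ms)))
      obtain ⟨Γ₂, B, hN⟩ :=
        typable_of_sub (Term.transGen_immSubterm_appList_of_mem List.mem_cons_self)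
      obtain ⟨Δ, hred, hN⟩ := hred.exists_common_ctx hN
      exact ⟨Δ, A, hred.appList_of_head (fun _ h => h.app_lam_of_subst hN) Ms⟩

/-- A term is β-strongly-normalizing iff it is typable in system D. -/
theorem snBeta_iff_typable (t : Term) : SNbeta t ↔ Typable t :=
  ⟨SNbeta.typable, Typable.snbeta⟩
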